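/- Let G be a triangulated Laman graph on n = k vertices with continuously differentiable control laws f_{ij}(·) := u_{ij}(·, d̄_{ij}), and let (G,p) be a framework in which vertex k has degree 2 and is adjacent to vertices i and j, the points x_i, x_j, x_k are collinear, and f_{ik}(d_{ik})(x_i − x_k) + f_{jk}(d_{jk})(x_j − x_k) = 0. Let g_{ij} ∈ C¹(ℝ_{>0},ℝ) satisfy g_{ij}(d_{ij})(x_j − x_i) = f_{ik}(d_{ik})(x_k − x_i), let G* be the subgraph of G induced by V \ {k} with p* the induced sub-configuration, and let ℛ be the formation control system induced by G* whose control law on edge (i,j) is f_{ij} + g_{ij} and whose control laws on all other edges of G* are unchanged. Then p* is an equilibrium of ℛ if and only if p is an equilibrium of the original system induced by G. -/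

import Mathlib

open scoped BigOperators

noncomputable section

/-- Points in the Euclidean plane. -/
abbrev Pt : Type := EuclideanSpace ℝ (Fin 2)

/-- The flattened space of planar configurations indexed by `ι`
(two real coordinates for each vertex). -/
abbrev Conf (ι : Type*) : Type _ := EuclideanSpace ℝ (ι × Fin 2)

/-- The position of agent `i` in the configuration `p`. -/
def pt {ι : Type*} (p : Conf ι) (i : ι) : Pt := WithLp.toLp 2 (fun c => p (i, c))

/-- The sub-configuration of `p` on the vertices in `S`. -/
def restr {ι : Type*} (S : Set ι) (p : Conf ι) : Conf ↥S := WithLp.toLp 2 (fun ic => p ((ic.1 : ι), ic.2))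

/-- The configuration space `P_G`: embeddings of the vertex set in the plane for which
adjacent vertices have distinct positions. -/
def configSpace {ι : Type*} (G : SimpleGraph ι) : Set (Conf ι) :=
  {p | ∀ i j : ι, G.Adj i j → pt p i ≠ pt p j}

/-- A Henneberg sequence for a triangulated Laman graph `G`, encoded by the order
`ord` in which the vertices appear, and for every step `l ≥ 2` the two earlier steps
`par1 l`, `par2 l`, whose (adjacent) vertices the new vertex `ord l` is joined to.
The edges of `G` are exactly the initial edge together with the edges created at
each step. -/
structure Henneberg {ι : Type*} (G : SimpleGraph ι) : Type _ where
  two_le : 2 ≤ Nat.card ι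
  ord : Fin (Nat.card ι) ≃ ι
  par1 : Fin (Nat.card ι) → Fin (Nat.card ι)
  par2 : Fin (Nat.card ι) → Fin (Nat.card ι)
  par1_lt : ∀ l : Fin (Nat.card ι), 2 ≤ (l : ℕ) → par1 l < l
  par2_lt : ∀ l : Fin (Nat.card ι), 2 ≤ (l : ℕ) → par2 l < l
  par_ne : ∀ l : Fin (Nat.card ι), 2 ≤ (l : ℕ) → par1 l ≠ par2 l
  par_adj : ∀ l : Fin (Nat.card ι), 2 ≤ (l : ℕ) → G.Adj (ord (par1 l)) (ord (par2 l))
  edge_iff : ∀ i j : ι, G.Adj i j ↔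
    (s(i, j) = s(ord ⟨0, by omega⟩, ord ⟨1, by omega⟩) ∨
      ∃ l : Fin (Nat.card ι), 2 ≤ (l : ℕ) ∧
        (s(i, j) = s(ord (par1 l), ord l) ∨ s(i, j) = s(ord (par2 l), ord l)))

/-- A graph is a triangulated Laman graph if it is (essentially) a single vertex, or
it can be built by a Henneberg sequence in which each new vertex is joined to the two
endpoints of an existing edge. -/
def IsTriangulatedLaman {ι : Type*} (G : SimpleGraph ι) : Prop :=
  Nat.card ι ≤ 1 ∨ Nonempty (Henneberg G)

open Classical in
/-- The potential `Φ` induced by `G`, with control laws `f i j = u_{ij}(⬝, d̄_{ij})`: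
`Φ(p) = Σ_{(i,j) ∈ E} ∫_1^{‖x_i - x_j‖} s u_{ij}(s, d̄_{ij}) ds`
(each edge is counted once; the double sum counts it twice, whence the factor 1/2). -/
def potential {ι : Type*} [Fintype ι] (G : SimpleGraph ι) (f : ι → ι → ℝ → ℝ)
    (p : Conf ι) : ℝ :=
  (1 / 2) * ∑ i : ι, ∑ j : ι,
    if G.Adj i j then ∫ s in (1 : ℝ)..(dist (pt p i) (pt p j)), s * f i j s else 0

open Classical in
/-- The right-hand side of the formation control system
`ẋ_i = Σ_{j ∈ N_i} u_{ij}(‖x_i - x_j‖, d̄_{ij}) (x_j - x_i)`. -/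
def formationField {ι : Type*} [Fintype ι] (G : SimpleGraph ι) (f : ι → ι → ℝ → ℝ)
    (p : Conf ι) : Conf ι :=
  WithLp.toLp 2 (fun ic => ∑ j : ι,
    if G.Adj ic.1 j then f ic.1 j (dist (pt p ic.1) (pt p j)) * (p (j, ic.2) - p (ic.1, ic.2))
    else 0)

/-- A monotone attraction/repulsion function: `f` is C¹ on `ℝ_{>0}`,
`d(x f(x))/dx > 0` for `x > 0`, `f` has a unique (positive) zero, and
`∫_x^1 s f(s) ds → -∞` as `x → 0⁺`. -/
structure IsMonoAttRep (f : ℝ → ℝ) : Prop where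
  contDiff : ContDiffOn ℝ 1 f (Set.Ioi 0)
  deriv_pos : ∀ x : ℝ, 0 < x → 0 < deriv (fun y => y * f y) x
  unique_zero : ∃! x : ℝ, 0 < x ∧ f x = 0
  collision : Filter.Tendsto (fun x : ℝ => ∫ s in x..(1 : ℝ), s * f s)
    (nhdsWithin 0 (Set.Ioi 0)) Filter.atBot

/-- 2×2 rotation matrices. -/
def IsRotation (θ : Matrix (Fin 2) (Fin 2) ℝ) : Prop := θ * θ.transpose = 1 ∧ θ.det = 1

/-- The action of `γ = (θ, v) ∈ SE(2)` on configurations: `γ·p = (θ x_1 + v, …, θ x_n + v)`. -/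
def se2Act {ι : Type*} (θ : Matrix (Fin 2) (Fin 2) ℝ) (v : Pt) (p : Conf ι) : Conf ι :=
  WithLp.toLp 2 (fun ic => θ.mulVec (pt p ic.1).ofLp ic.2 + v ic.2)

/-- The SE(2)-orbit `O_p` of a configuration `p`. -/
def se2Orbit {ι : Type*} (p : Conf ι) : Set (Conf ι) :=
  {q | ∃ θ v, IsRotation θ ∧ q = se2Act θ v p}

/-- Rotation by 90 degrees. -/
def rotJ : Matrix (Fin 2) (Fin 2) ℝ := !![0, -1; 1, 0]

/-- The infinitesimal rotation of a configuration. -/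
def infRot {ι : Type*} (p : Conf ι) : Conf ι := WithLp.toLp 2 (fun ic => rotJ.mulVec (pt p ic.1).ofLp ic.2)

/-- The infinitesimal translation in coordinate direction `c`. -/
def transl (ι : Type*) (c : Fin 2) : Conf ι := WithLp.toLp 2 (fun ic => if ic.2 = c then 1 else 0)

/-- The tangent space at `p` of the SE(2)-orbit `O_p`. -/
def orbitTangent {ι : Type*} (p : Conf ι) : Submodule ℝ (Conf ι) :=
  Submodule.span ℝ {infRot p, transl ι 0, transl ι 1}

/-- The Hessian matrix `H_p = ∂²Φ(p)/∂p²`. -/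
def hessianMat {ι : Type*} [Fintype ι] [DecidableEq ι] (Φ : Conf ι → ℝ) (p : Conf ι) :
    Matrix (ι × Fin 2) (ι × Fin 2) ℝ :=
  Matrix.of fun a b =>
    iteratedFDeriv ℝ 2 Φ p ![EuclideanSpace.single a 1, EuclideanSpace.single b 1]

/-- The Hessian of `Φ` at `p` with respect to the coordinates of the vertices in `S`
(for `Φ` depending only on those coordinates this is the Hessian of the induced
function of the positions of the vertices in `S`). -/
def hessianMatOn {ι : Type*} [Fintype ι] [DecidableEq ι] (Φ : Conf ι → ℝ) (p : Conf ι) (S : Set ι) :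
    Matrix (↥S × Fin 2) (↥S × Fin 2) ℝ :=
  Matrix.of fun a b => hessianMat Φ p ((a.1 : ι), a.2) ((b.1 : ι), b.2)

open Classical in
/-- `N₊(A)`: the number of positive eigenvalues of a real symmetric matrix,
counted with multiplicity. -/
def nPos {m : Type*} [Finite m] (A : Matrix m m ℝ) : ℕ :=
  letI := Fintype.ofFinite m
  letI := Classical.decEq m
  if h : A.IsHermitian then Fintype.card {i // 0 < h.eigenvalues i} else 0

open Classical in
/-- `N₋(A)`: the number of negative eigenvalues of a real symmetric matrix,
counted with multiplicity. -/
def nNeg {m : Type*} [Finite m] (A : Matrix m m ℝ) : ℕ :=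
  letI := Fintype.ofFinite m
  letI := Classical.decEq m
  if h : A.IsHermitian then Fintype.card {i // h.eigenvalues i < 0} else 0

open Classical in
/-- `N₀(A)`: the number of zero eigenvalues of a real symmetric matrix,
counted with multiplicity. -/
def nZero {m : Type*} [Finite m] (A : Matrix m m ℝ) : ℕ :=
  letI := Fintype.ofFinite m
  letI := Classical.decEq m
  if h : A.IsHermitian then Fintype.card {i // h.eigenvalues i = 0} else 0

/-- `Φ` is an equivariant Morse function on `P_G`: it has finitely many critical orbits,
and each critical orbit is nondegenerate (the Hessian has exactly three zero eigenvalues). -/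
def IsEquivariantMorse {ι : Type*} [Fintype ι] [DecidableEq ι] (G : SimpleGraph ι)
    (Φ : Conf ι → ℝ) : Prop :=
  {O : Set (Conf ι) | ∃ p ∈ configSpace G, gradient Φ p = 0 ∧ O = se2Orbit p}.Finite ∧
  ∀ p ∈ configSpace G, gradient Φ p = 0 → nZero (hessianMat Φ p) = 3

/-- `i`, `j`, `k` form a 3-cycle of `G`. -/
def Is3Cycle {ι : Type*} (G : SimpleGraph ι) (i j k : ι) : Prop :=
  G.Adj i j ∧ G.Adj i k ∧ G.Adj j k

/-- A framework `(G, p)` is strongly rigid if every 3-cycle of `G` is embedded by `p`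
as a nondegenerate triangle. -/
def StronglyRigid {ι : Type*} (G : SimpleGraph ι) (p : Conf ι) : Prop :=
  ∀ i j k : ι, Is3Cycle G i j k →
    LinearIndependent ℝ ![pt p j - pt p i, pt p k - pt p i]

/-- The target distances satisfy the strict triangle inequalities associated with `G`. -/
def StrictTriangleIneqs {ι : Type*} (G : SimpleGraph ι) (dbar : ι → ι → ℝ) : Prop :=
  ∀ i j k : ι, Is3Cycle G i j k →
    dbar j k < dbar i j + dbar i k ∧ dbar i k < dbar i j + dbar j k ∧
      dbar i j < dbar i k + dbar j k

/-- A triangulated formation system: a formation control system induced by a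
triangulated Laman graph, with target distances satisfying the strict triangle
inequalities, monotone attraction/repulsion control laws vanishing at the target
distances, and whose potential is an equivariant Morse function. -/
structure IsTriFormation {ι : Type*} [Fintype ι] [DecidableEq ι] (G : SimpleGraph ι)
    (f : ι → ι → ℝ → ℝ) (dbar : ι → ι → ℝ) : Prop where
  laman : IsTriangulatedLaman G
  fsymm : ∀ i j, f i j = f j i
  dsymm : ∀ i j, dbar i j = dbar j i
  dpos : ∀ i j, G.Adj i j → 0 < dbar i j
  mono : ∀ i j, G.Adj i j → IsMonoAttRep (f i j)
  fzero : ∀ i j, G.Adj i j → f i j (dbar i j) = 0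
  triangle : StrictTriangleIneqs G dbar
  morse : IsEquivariantMorse G (potential G f)

/-- The (critical) orbit of `p` is exponentially stable: the Hessian of `Φ` at `p` has
exactly three zero eigenvalues and no negative eigenvalues (all the others positive). -/
def ExpStableAt {ι : Type*} [Fintype ι] [DecidableEq ι] (Φ : Conf ι → ℝ) (p : Conf ι) : Prop :=
  nZero (hessianMat Φ p) = 3 ∧ nNeg (hessianMat Φ p) = 0

/-- Generating relation for the independent partition: at each step `l ≥ 2` of the
Henneberg sequence in which the new vertex is aligned with its two parents, the two
new edges are related to the parent edge. -/
def triGen {ι : Type*} {G : SimpleGraph ι} (H : Henneberg G) (p : Conf ι) :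
    Sym2 ι → Sym2 ι → Prop := fun e e' =>
  ∃ l : Fin (Nat.card ι), 2 ≤ (l : ℕ) ∧
    Collinear ℝ {pt p (H.ord (H.par1 l)), pt p (H.ord (H.par2 l)), pt p (H.ord l)} ∧
    e' = s(H.ord (H.par1 l), H.ord (H.par2 l)) ∧
    (e = s(H.ord (H.par1 l), H.ord l) ∨ e = s(H.ord (H.par2 l), H.ord l))

/-- The independent partition of the edge set of `G` for the framework `(G, p)`,
computed along the Henneberg sequence `H`. -/
def indepPartition {ι : Type*} {G : SimpleGraph ι} (H : Henneberg G) (p : Conf ι) :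
    Set (Set (Sym2 ι)) :=
  {C | ∃ e ∈ G.edgeSet, C = {e' | e' ∈ G.edgeSet ∧ Relation.EqvGen (triGen H p) e e'}}

/-- The set `V_i` of vertices incident to the edges in a class `C`. -/
def classVerts {ι : Type*} (C : Set (Sym2 ι)) : Set ι := {v | ∃ e ∈ C, v ∈ e}

end

/-! At `p` the reduced field and the original field are equal, not merely zero together.
Both are instances of the field `ẋ_a = ∑_b w a b • (x_b - x_a)`, which is additive in the
weight matrix `w`. The reduction deletes the weights `f_ik(d_ik)`, `f_jk(d_jk)` of the two
edges at `k` and adds `g(d_ij)` on the edge `ij`; and the field of a single edge `ij` of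
weight `γ` agrees with that of the path `i k j` of weights `α`, `β` as soon as the two fields
agree at `i` and at `k` (agreement at `j` follows, as the total force of each field is zero).
At `i` this is the defining property of `g`, at `k` the stationarity of `x_k`. -/

theorem pt_add {ι : Type*} (q q' : Conf ι) (a : ι) : pt (q + q') a = pt q a + pt q' a := rfl

theorem Conf.ext_pt {ι : Type*} {q q' : Conf ι} (h : ∀ a, pt q a = pt q' a) : q = q' := by
  ext ⟨a, c⟩
  exact congrArg (fun x : Pt => x c) (h a)

theorem SimpleGraph.fromEdgeSet_edgeSet_sdiff_eq_deleteIncidenceSet {ι : Type*}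
    (G : SimpleGraph ι) (k : ι) :
    fromEdgeSet (G.edgeSet \ {e : Sym2 ι | k ∈ e}) = G.deleteIncidenceSet k := by
  ext a b
  simp only [fromEdgeSet_adj, Set.mem_sdiff, mem_edgeSet, Set.mem_ofPred_eq, Sym2.mem_iff,
    deleteIncidenceSet_adj]
  constructor
  · rintro ⟨⟨hab, hk⟩, -⟩
    exact ⟨hab, fun h => hk (Or.inl h.symm), fun h => hk (Or.inr h.symm)⟩
  · rintro ⟨hab, hak, hbk⟩
    exact ⟨⟨hab, by rintro (h | h) <;> simp_all⟩, hab.ne⟩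

section Weights

variable {ι : Type*}

open Classical in
noncomputable def adjWeights (G : SimpleGraph ι) (f : ι → ι → ℝ → ℝ) (p : Conf ι) (a b : ι) :
    ℝ :=
  if G.Adj a b then f a b (dist (pt p a) (pt p b)) else 0

variable [DecidableEq ι]

def edgeWeight (i j : ι) (c : ℝ) (a b : ι) : ℝ :=
  if s(a, b) = s(i, j) then c else 0

theorem adjWeights_add_edgeWeight {H : SimpleGraph ι} {i j : ι} (hij : H.Adj i j)
    (f : ι → ι → ℝ → ℝ) (g : ℝ → ℝ) (p : Conf ι) :
    adjWeights H (fun a b s => if s(a, b) = s(i, j) then f a b s + g s else f a b s) p =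
      adjWeights H f p + edgeWeight i j (g (dist (pt p i) (pt p j))) := by
  ext a b
  simp only [adjWeights, edgeWeight, Pi.add_apply]
  by_cases he : s(a, b) = s(i, j)
  · have hab : H.Adj a b := (SimpleGraph.mem_edgeSet H).1 (he ▸ hij)
    rcases Sym2.eq_iff.1 he with ⟨rfl, rfl⟩ | ⟨rfl, rfl⟩
    · simp [hab]
    · simp [hab, dist_comm]
  · simp [he]

theorem adjWeights_eq_deleteIncidenceSet_add {G : SimpleGraph ι} {f : ι → ι → ℝ → ℝ}
    (hf : ∀ a b, f a b = f b a) {i j k : ι} (hij : i ≠ j) (hk : G.neighborSet k = {i, j})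
    (p : Conf ι) :
    adjWeights G f p = adjWeights (G.deleteIncidenceSet k) f p +
      (edgeWeight i k (f i k (dist (pt p i) (pt p k))) +
        edgeWeight j k (f j k (dist (pt p j) (pt p k)))) := by
  classical
  have hadj : ∀ b, G.Adj k b ↔ b = i ∨ b = j := fun b => by
    rw [← SimpleGraph.mem_neighborSet, hk]; rfl
  ext a b
  simp only [adjWeights, edgeWeight, Pi.add_apply, SimpleGraph.deleteIncidenceSet_adj]
  by_cases hak : a = k
  · subst hak
    simp only [hadj b, Sym2.eq_swap (a := i), Sym2.eq_swap (a := j), Sym2.congr_right,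
      ne_eq, not_true_eq_false, false_and, and_false, if_false, zero_add]
    rcases em (b = i) with rfl | hbi
    · simp [hij, hf b, dist_comm]
    rcases em (b = j) with rfl | hbj
    · simp [hbi, hf b, dist_comm]
    simp [hbi, hbj]
  by_cases hbk : b = k
  · subst hbk
    simp only [G.adj_comm a, hadj a, Sym2.congr_left,
      ne_eq, not_true_eq_false, and_false, if_false, zero_add]
    rcases em (a = i) with rfl | hai
    · simp [hij]
    rcases em (a = j) with rfl | haj
    · simp [hai]
    simp [hai, haj]
  have hnot : ∀ c, s(a, b) ≠ s(c, k) := fun c h => by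
    rcases Sym2.eq_iff.1 h with ⟨-, h⟩ | ⟨h, -⟩ <;> contradiction
  simp [hak, hbk, hnot]

end Weights

section WeightField

variable {ι : Type*} [Fintype ι]

noncomputable def weightField (w : ι → ι → ℝ) (p : Conf ι) : Conf ι :=
  WithLp.toLp 2 fun ic => ∑ j, w ic.1 j * (p (j, ic.2) - p (ic.1, ic.2))

theorem pt_weightField (w : ι → ι → ℝ) (p : Conf ι) (a : ι) :
    pt (weightField w p) a = ∑ b, w a b • (pt p b - pt p a) := by
  ext c
  simp [pt, weightField]

theorem weightField_add (w w' : ι → ι → ℝ) (p : Conf ι) :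
    weightField (w + w') p = weightField w p + weightField w' p := by
  ext ic
  simp [weightField, add_mul, Finset.sum_add_distrib]

theorem formationField_eq_weightField (G : SimpleGraph ι) (f : ι → ι → ℝ → ℝ) (p : Conf ι) :
    formationField G f p = weightField (adjWeights G f p) p := by
  ext ic
  simp [formationField, weightField, adjWeights, ite_mul]

variable [DecidableEq ι]

theorem pt_weightField_edgeWeight {i j : ι} (hij : i ≠ j) (c : ℝ) (p : Conf ι) (a : ι) :
    pt (weightField (edgeWeight i j c) p) a =
      if a = i then c • (pt p j - pt p i) else if a = j then c • (pt p i - pt p j) else 0 := by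
  rw [pt_weightField]
  split_ifs with hai haj
  · subst hai
    simp only [edgeWeight, Sym2.congr_right, ite_smul, zero_smul, Finset.sum_ite_eq',
      Finset.mem_univ, if_true]
  · subst haj
    simp only [edgeWeight, Sym2.eq_swap (a := i), Sym2.congr_right, ite_smul, zero_smul,
      Finset.sum_ite_eq', Finset.mem_univ, if_true]
  · refine Finset.sum_eq_zero fun b _ => ?_
    have hab : s(a, b) ≠ s(i, j) := fun h => by
      rcases Sym2.eq_iff.1 h with ⟨h, -⟩ | ⟨h, -⟩ <;> contradiction
    simp [edgeWeight, hab]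

theorem weightField_edgeWeight_eq_add {i j k : ι} (hij : i ≠ j) (hik : i ≠ k) (hjk : j ≠ k)
    {γ α β : ℝ} {p : Conf ι}
    (hi : γ • (pt p j - pt p i) = α • (pt p k - pt p i))
    (hk : α • (pt p i - pt p k) + β • (pt p j - pt p k) = 0) :
    weightField (edgeWeight i j γ) p = weightField (edgeWeight i k α + edgeWeight j k β) p := by
  have hj : γ • (pt p i - pt p j) = β • (pt p k - pt p j) := by
    linear_combination (norm := module) hk - hi
  refine Conf.ext_pt fun a => ?_
  rw [weightField_add, pt_add]
  simp only [pt_weightField_edgeWeight hij, pt_weightField_edgeWeight hik,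
    pt_weightField_edgeWeight hjk]
  by_cases hai : a = i
  · subst hai; simp [hij, hik, hi]
  by_cases haj : a = j
  · subst haj; simp [hij.symm, hjk, hj]
  by_cases hak : a = k
  · subst hak; simp [hik.symm, hjk.symm, hk]
  simp [hai, haj, hak]

end WeightField

open Classical in
theorem stmt14_general {ι : Type*} [Fintype ι] [DecidableEq ι] (G : SimpleGraph ι)
    (f : ι → ι → ℝ → ℝ)
    (hfsymm : ∀ i j, f i j = f j i)
    (vi vj vk : ι) (hadjij : G.Adj vi vj) (hadjik : G.Adj vi vk) (hadjjk : G.Adj vj vk)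
    (hdeg : G.neighborSet vk = {vi, vj})
    (p : Conf ι)
    (hstat : f vi vk (dist (pt p vi) (pt p vk)) • (pt p vi - pt p vk)
        + f vj vk (dist (pt p vj) (pt p vk)) • (pt p vj - pt p vk) = 0)
    (g : ℝ → ℝ)
    (hgval : g (dist (pt p vi) (pt p vj)) • (pt p vj - pt p vi)
        = f vi vk (dist (pt p vi) (pt p vk)) • (pt p vk - pt p vi)) :
    (formationField (SimpleGraph.fromEdgeSet (G.edgeSet \ {e : Sym2 ι | vk ∈ e}))
        (fun a b s => if s(a, b) = s(vi, vj) then f a b s + g s else f a b s) p = 0)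
      ↔ formationField G f p = 0 := by
  have hij : vi ≠ vj := hadjij.ne
  have hik : vi ≠ vk := hadjik.ne
  have hjk : vj ≠ vk := hadjjk.ne
  have hadj : (G.deleteIncidenceSet vk).Adj vi vj :=
    SimpleGraph.deleteIncidenceSet_adj.2 ⟨hadjij, hik, hjk⟩
  rw [SimpleGraph.fromEdgeSet_edgeSet_sdiff_eq_deleteIncidenceSet, formationField_eq_weightField,
    formationField_eq_weightField, adjWeights_add_edgeWeight hadj,
    adjWeights_eq_deleteIncidenceSet_add hfsymm hij hdeg, weightField_add, weightField_add,
    weightField_edgeWeight_eq_add hij hik hjk hgval hstat]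

open Classical in
/-- Lemma 4.2 of the paper: system reduction. Let `G` be a triangulated
Laman graph, let a vertex `vk` of degree `2` be adjacent exactly to `vi` and `vj` (which
are adjacent), let `x_{vi}, x_{vj}, x_{vk}` be collinear with the dynamics of `x_{vk}`
vanishing at `p`, and let `g` be a `C¹` function with
`g(d_{ij})(x_j - x_i) = f_{ik}(d_{ik})(x_k - x_i)`. Then the configuration obtained by
removing `vk` is an equilibrium of the reduced system `ℛ` (induced by the subgraph on the
remaining vertices, with the control law on `(vi, vj)` replaced by `f_{ij} + g`) if and
only if `p` is an equilibrium of the original system. -/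
theorem stmt14 {ι : Type*} [Fintype ι] [DecidableEq ι] (G : SimpleGraph ι)
    (hG : IsTriangulatedLaman G)
    (f : ι → ι → ℝ → ℝ) (hf : ∀ i j, ContDiffOn ℝ 1 (f i j) (Set.Ioi 0))
    (hfsymm : ∀ i j, f i j = f j i)
    (vi vj vk : ι) (hadjij : G.Adj vi vj) (hadjik : G.Adj vi vk) (hadjjk : G.Adj vj vk)
    (hdeg : G.neighborSet vk = {vi, vj})
    (p : Conf ι) (hp : p ∈ configSpace G)
    (hcol : Collinear ℝ {pt p vi, pt p vj, pt p vk})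
    (hstat : f vi vk (dist (pt p vi) (pt p vk)) • (pt p vi - pt p vk)
        + f vj vk (dist (pt p vj) (pt p vk)) • (pt p vj - pt p vk) = 0)
    (g : ℝ → ℝ) (hg : ContDiffOn ℝ 1 g (Set.Ioi 0))
    (hgval : g (dist (pt p vi) (pt p vj)) • (pt p vj - pt p vi)
        = f vi vk (dist (pt p vi) (pt p vk)) • (pt p vk - pt p vi)) :
    (formationField (SimpleGraph.fromEdgeSet (G.edgeSet \ {e : Sym2 ι | vk ∈ e}))
        (fun a b s => if s(a, b) = s(vi, vj) then f a b s + g s else f a b s) p = 0)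
      ↔ formationField G f p = 0 :=
  stmt14_general G f hfsymm vi vj vk hadjij hadjik hadjjk hdeg p hstat g hgval
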